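/- Let S be a semicopula. If for all measurable spaces (X,𝒜), all capacities μ, all measurable f, and all a ∈ [0,1], I_S(μ, S(a,f)) = S(a, I_S(μ,f)) holds, then S is associative and, for each a ∈ (0,1), x ↦ S(a,x) is continuous on [0,1]. -/

import Mathlib

open unitInterval Set Filter Topology

instance : Fact ((0:ℝ) ≤ 1) := ⟨zero_le_one⟩

/-- A semicopula: nondecreasing in each coordinate, neutral element 1. -/
def IsSemicopula (S : I → I → I) : Prop :=
  (∀ x, S x 1 = x) ∧ (∀ x, S 1 x = x) ∧
  (∀ y, Monotone fun x => S x y) ∧ (∀ x, Monotone fun y => S x y)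

/-- A capacity: monotone set function with value 0 at ∅ and 1 at univ. -/
def IsCapacity {X : Type} [MeasurableSpace X] (μ : Set X → I) : Prop :=
  (∀ A B : Set X, MeasurableSet A → MeasurableSet B → A ⊆ B → μ A ≤ μ B) ∧
  μ (∅ : Set X) = 0 ∧ μ (univ : Set X) = 1

/-- The generalized Sugeno (seminormed fuzzy) integral. -/
noncomputable def sugeno {X : Type} [MeasurableSpace X] (S : I → I → I)
    (μ : Set X → I) (f : X → I) : I :=
  ⨆ t : I, S t (μ {x | t ≤ f x})

/-!
Associativity: the integral of the step function `b • 𝟙_A` is `S b (μ A)`, and `S a` maps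
`b • 𝟙_A` to `(S a b) • 𝟙_A`; a capacity with `μ A = p` turns the hypothesis into
`S (S a b) p = S a (S b p)`.

Continuity: for the `{0,1}`-valued capacity of a filter `F` the integral is `liminf f F`, since
`S t 1 = t` and `S t 0 = 0`; so the hypothesis says that `S a` commutes with `liminf` along every
ultrafilter. Along an ultrafilter converging to `c`, `S a` converges (the unit interval is
compact) to some limit, which is its `liminf` and therefore `S a c`.
-/

namespace IsSemicopula

variable {S : I → I → I}

lemma le_left (hS : IsSemicopula S) (x y : I) : S x y ≤ x :=
  (hS.2.2.2 x le_one').trans_eq (hS.1 x)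

lemma le_right (hS : IsSemicopula S) (x y : I) : S x y ≤ y :=
  (hS.2.2.1 y le_one').trans_eq (hS.2.1 y)

lemma apply_zero_right (hS : IsSemicopula S) (x : I) : S x 0 = 0 :=
  le_antisymm (hS.le_right x 0) nonneg'

lemma apply_zero_left (hS : IsSemicopula S) (y : I) : S 0 y = 0 :=
  le_antisymm (hS.le_left 0 y) nonneg'

end IsSemicopula

section StepFunction

variable {X : Type} {S : I → I → I}

lemma setOf_le_indicator_const {A : Set X} {b t : I} (ht : t ≠ 0) :
    {x | t ≤ A.indicator (fun _ => b) x} = if t ≤ b then A else ∅ := by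
  ext x
  by_cases hx : x ∈ A <;> split_ifs <;>
    simp_all [Set.indicator_of_mem, Set.indicator_of_notMem]

lemma sugeno_indicator_const [MeasurableSpace X] (hS : IsSemicopula S) {μ : Set X → I}
    (hμ : μ ∅ = 0) (A : Set X) (b : I) : sugeno S μ (A.indicator fun _ => b) = S b (μ A) := by
  refine le_antisymm (iSup_le fun t => ?_) ?_
  · rcases eq_or_ne t 0 with rfl | ht
    · simp only [hS.apply_zero_left, zero_le]
    rw [setOf_le_indicator_const ht]
    split_ifs with htb
    · exact hS.2.2.1 _ htb
    · simp only [hμ, hS.apply_zero_right, zero_le]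
  · rcases eq_or_ne b 0 with rfl | hb
    · simp only [hS.apply_zero_left, zero_le]
    refine le_iSup_of_le b ?_
    rw [setOf_le_indicator_const hb, if_pos le_rfl]

end StepFunction

open Classical in
noncomputable def pointCapacity {X : Type} (x₀ : X) (p : I) : Set X → I :=
  fun A => if A = univ then 1 else if x₀ ∈ A then p else 0

lemma isCapacity_pointCapacity {X : Type} [MeasurableSpace X] (x₀ : X) (p : I) :
    IsCapacity (pointCapacity x₀ p) := by
  have : Nonempty X := ⟨x₀⟩
  refine ⟨fun A B _ _ hAB => ?_,
    by rw [pointCapacity, if_neg empty_ne_univ, if_neg (notMem_empty x₀)], if_pos rfl⟩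
  unfold pointCapacity
  by_cases hB : B = univ
  · rw [if_pos hB]
    exact le_one'
  have hA : A ≠ univ := fun hA => hB (univ_subset_iff.mp (hA ▸ hAB))
  rw [if_neg hA, if_neg hB]
  by_cases hxA : x₀ ∈ A
  · rw [if_pos hxA, if_pos (hAB hxA)]
  · rw [if_neg hxA]
    exact zero_le

lemma pointCapacity_singleton_true (p : I) : pointCapacity true p {true} = p := by
  have hne : ({true} : Set Bool) ≠ univ := fun h =>
    Bool.false_ne_true (h ▸ mem_univ false : false ∈ ({true} : Set Bool))
  rw [pointCapacity, if_neg hne, if_pos (mem_singleton true)]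

lemma IsSemicopula.assoc_of_sugeno_comm {S : I → I → I} (hS : IsSemicopula S)
    (hcomm : ∀ (μ : Set Bool → I) (f : Bool → I), IsCapacity μ → ∀ a : I,
      sugeno S μ (fun x => S a (f x)) = S a (sugeno S μ f))
    (a b p : I) : S (S a b) p = S a (S b p) := by
  have hμ : IsCapacity (pointCapacity true p) := isCapacity_pointCapacity true p
  have hstep : (fun x => S a (({true} : Set Bool).indicator (fun _ => b) x)) =
      ({true} : Set Bool).indicator fun _ => S a b :=
    (indicator_comp_of_zero (hS.apply_zero_right a)).symm
  have h := hcomm _ (({true} : Set Bool).indicator fun _ => b) hμ a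
  rwa [hstep, sugeno_indicator_const hS hμ.2.1, sugeno_indicator_const hS hμ.2.1,
    pointCapacity_singleton_true] at h

open Classical in
noncomputable def filterCapacity {X : Type} (F : Filter X) : Set X → I :=
  fun A => if A ∈ F then 1 else 0

lemma isCapacity_filterCapacity {X : Type} [MeasurableSpace X] (F : Filter X) [F.NeBot] :
    IsCapacity (filterCapacity F) := by
  refine ⟨fun A B _ _ hAB => ?_, by simp [filterCapacity], by simp [filterCapacity]⟩
  unfold filterCapacity
  split_ifs with hA hB
  · exact le_rfl
  · exact absurd (mem_of_superset hA hAB) hB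
  · exact zero_le
  · exact le_rfl

lemma sugeno_filterCapacity {X : Type} [MeasurableSpace X] {S : I → I → I}
    (hS : IsSemicopula S) (F : Filter X) (f : X → I) :
    sugeno S (filterCapacity F) f = liminf f F := by
  rw [liminf_eq]
  refine le_antisymm (iSup_le fun t => ?_) (sSup_le fun t ht => le_iSup_of_le t ?_)
  · unfold filterCapacity
    split_ifs with ht
    · exact (hS.1 t).trans_le (le_sSup ht)
    · exact (hS.apply_zero_right t).trans_le zero_le
  · simp only [filterCapacity, if_pos (show {x | t ≤ f x} ∈ F from ht), hS.1, le_rfl]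

lemma continuous_of_liminf_comm {α β : Type*} [CompleteLinearOrder α] [TopologicalSpace α]
    [OrderTopology α] [CompleteLinearOrder β] [TopologicalSpace β] [OrderTopology β]
    {g : α → β} (hg : ∀ U : Ultrafilter α, liminf g U = g (liminf (fun x => x) U)) :
    Continuous g := by
  refine continuous_iff_continuousAt.mpr fun c => ?_
  refine (tendsto_iff_ultrafilter g _ _).mpr fun U hU => ?_
  have hlim : Tendsto g U (𝓝 (U.map g).lim) := (U.map g).le_nhds_lim
  have hid : Tendsto (fun x => x) U (𝓝 c) := hU
  rwa [← hlim.liminf_eq, hg, hid.liminf_eq] at hlim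

theorem prop_implies_assoc_and_cont (S : I → I → I) (hS : IsSemicopula S)
    (hprop : ∀ (X : Type) [MeasurableSpace X] (μ : Set X → I) (f : X → I),
      IsCapacity μ → Measurable f → ∀ a : I,
        sugeno S μ (fun x => S a (f x)) = S a (sugeno S μ f)) :
    (∀ x y z : I, S (S x y) z = S x (S y z)) ∧
    (∀ a : I, 0 < a → a < 1 → Continuous fun x => S a x) := by
  refine ⟨hS.assoc_of_sugeno_comm fun μ f hμ =>
    hprop Bool μ f hμ Measurable.of_discrete, fun a _ _ => ?_⟩
  refine continuous_of_liminf_comm fun U => ?_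
  have h := hprop I (filterCapacity U) (fun x => x)
    (isCapacity_filterCapacity (U : Filter I)) measurable_id a
  rwa [sugeno_filterCapacity hS, sugeno_filterCapacity hS] at h
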